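/- (Pairing on complete graph minus one vertex) Let n ≥ 3, let all countries in Fin n be pairwise adversaries, fix i ∈ Fin n, and suppose that on Fin n \ {i} no country's power exceeds the sum of the others' powers in Fin n \ {i}, i.e., for all j ≠ i, p_j ≤ Σ_{k≠i, k≠j} p_k. Then there exists a nonnegative symmetric matrix U' indexed by Fin n \ {i} with zero diagonal and row sums Σ_k U'_{jk} = p_j for all j ≠ i. -/

import Mathlib

/-!
Cut a circle of circumference `∑ p` into consecutive arcs of lengths `p j`. The hypothesis says
that every arc is at most half the circle, so no arc meets its own image under the antipodal map.
Since that map is a measure-preserving involution, the measure of the set of points of arc `j`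
whose antipode lies in arc `k` is symmetric in `j, k`, vanishes for `j = k`, and sums over `k`
to the length `p j` of arc `j`.
-/

open Finset MeasureTheory
open scoped NNReal ENNReal

theorem sum_measure_inter_preimage {ι α β : Type*} [MeasurableSpace α] [MeasurableSpace β]
    (μ : Measure α) {s : Finset ι} {I : ι → Set β} (hdisj : (s : Set ι).PairwiseDisjoint I)
    (hmeas : ∀ k ∈ s, MeasurableSet (I k)) {f : α → β} (hf : Measurable f) (A : Set α) :
    ∑ k ∈ s, μ (A ∩ f ⁻¹' I k) = μ (A ∩ f ⁻¹' ⋃ k ∈ s, I k) := by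
  have hν : ∀ t, MeasurableSet t → (μ.restrict A).map f t = μ (A ∩ f ⁻¹' t) := fun t ht => by
    rw [Measure.map_apply hf ht, Measure.restrict_apply (hf ht), Set.inter_comm]
  rw [← hν _ (s.measurableSet_biUnion hmeas), measure_biUnion_finset hdisj hmeas]
  exact sum_congr rfl fun k hk => (hν _ (hmeas k hk)).symm

theorem volume_inter_preimage_sub_const_comm (A B : Set ℝ) (h : ℝ) :
    volume (A ∩ (· - h) ⁻¹' B) = volume (B ∩ (· + h) ⁻¹' A) := by
  rw [← measure_preimage_add_right volume h]
  congr 1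
  ext x
  simp [and_comm]

section AntipodalOverlap

variable {ι : Type*}

/-- For arcs `I k ⊆ [0, 2 * h)` of a circle of circumference `2 * h` cut open at `0`, the antipode
of `x` is whichever of `x + h`, `x - h` lies in `[0, 2 * h)`. -/
noncomputable def antipodalOverlap (I : ι → Set ℝ) (h : ℝ) (j k : ι) : ℝ≥0∞ :=
  volume (I j ∩ (· - h) ⁻¹' I k) + volume (I j ∩ (· + h) ⁻¹' I k)

theorem antipodalOverlap_comm (I : ι → Set ℝ) (h : ℝ) (j k : ι) :
    antipodalOverlap I h j k = antipodalOverlap I h k j := by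
  rw [antipodalOverlap, antipodalOverlap, volume_inter_preimage_sub_const_comm (I j),
    volume_inter_preimage_sub_const_comm (I k), add_comm]

theorem antipodalOverlap_self_eq_zero {I : ι → Set ℝ} {h c w : ℝ} {j : ι}
    (hI : I j = Set.Ico c (c + w)) (hw : w ≤ h) : antipodalOverlap I h j j = 0 := by
  have hsub : Disjoint (I j) ((· - h) ⁻¹' I j) := by
    rw [hI, Set.preimage_sub_const_Ico, Set.Ico_disjoint_Ico]
    exact (min_le_left _ _).trans ((add_le_add_right hw c).trans (le_max_right _ _))
  have hadd : Disjoint (I j) ((· + h) ⁻¹' I j) := by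
    rw [hI, Set.preimage_add_const_Ico, Set.Ico_disjoint_Ico]
    exact (min_le_right _ _).trans (by linarith [le_max_left c (c - h)])
  simp [antipodalOverlap, hsub.inter_eq, hadd.inter_eq]

theorem sum_antipodalOverlap {I : ι → Set ℝ} {s : Finset ι} {h : ℝ}
    (hdisj : (s : Set ι).PairwiseDisjoint I) (hmeas : ∀ k ∈ s, MeasurableSet (I k))
    (hunion : ⋃ k ∈ s, I k = Set.Ico 0 (2 * h)) {j : ι} (hj : j ∈ s) :
    ∑ k ∈ s, antipodalOverlap I h j k = volume (I j) := by
  have hsub : I j ⊆ Set.Ico 0 (2 * h) := hunion ▸ Set.subset_biUnion_of_mem (u := I) hj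
  simp only [antipodalOverlap]
  rw [sum_add_distrib, sum_measure_inter_preimage _ hdisj hmeas (measurable_sub_const h),
    sum_measure_inter_preimage _ hdisj hmeas (measurable_add_const h), hunion,
    ← measure_inter_add_sdiff (I j) (measurableSet_Ici (a := h)),
    Set.preimage_sub_const_Ico, Set.preimage_add_const_Ico]
  congr 2 <;> ext x <;> have := @hsub x <;>
    simp only [Set.mem_inter_iff, Set.mem_sdiff, Set.mem_Ico, Set.mem_Ici] at this ⊢ <;> grind

end AntipodalOverlap

theorem exists_pairwiseDisjoint_Ico_biUnion_eq_Ico {ι : Type*} [DecidableEq ι]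
    (s : Finset ι) (l : ι → ℝ≥0) :
    ∃ a : ι → ℝ, (s : Set ι).PairwiseDisjoint (fun k => Set.Ico (a k) (a k + l k)) ∧
      ⋃ k ∈ s, Set.Ico (a k) (a k + l k) = Set.Ico 0 (∑ k ∈ s, (l k : ℝ)) := by
  induction s using Finset.induction_on with
  | empty => exact ⟨0, by simp, by simp⟩
  | insert j s hj ih =>
    obtain ⟨a, hdisj, hunion⟩ := ih
    set S := ∑ k ∈ s, (l k : ℝ)
    have hS : 0 ≤ S := by positivity
    set a' := Function.update a j S
    have ha' : ∀ k ∈ s, a' k = a k := fun k hk =>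
      Function.update_of_ne (ne_of_mem_of_not_mem hk hj) _ _
    have hsub : ∀ k ∈ s, Set.Ico (a' k) (a' k + l k) ⊆ Set.Ico 0 S := fun k hk => by
      rw [← hunion, ha' k hk]
      exact Set.subset_biUnion_of_mem (u := fun k => Set.Ico (a k) (a k + l k)) hk
    refine ⟨a', ?_, ?_⟩
    · rw [coe_insert]
      refine Set.PairwiseDisjoint.insert_of_notMem ?_ hj fun k hk => ?_
      · intro k hk m hm hkm
        simp only [Function.onFun, ha' k hk, ha' m hm]
        exact hdisj hk hm hkm
      · simp only [a', Function.update_self]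
        exact (Set.Ico_disjoint_Ico_same.mono_left (hsub k hk)).symm
    · rw [set_biUnion_insert, sum_insert hj, Set.iUnion₂_congr fun k hk => by rw [ha' k hk], hunion]
      simp only [a', Function.update_self]
      rw [Set.union_comm, Set.Ico_union_Ico_eq_Ico hS (by simp), add_comm]

theorem Finset.exists_symm_rowSum_eq_of_le_sum_erase {ι : Type*} [DecidableEq ι]
    (s : Finset ι) (p : ι → ℝ≥0) (hp : ∀ j ∈ s, p j ≤ ∑ k ∈ s.erase j, p k) :
    ∃ U : ι → ι → ℝ≥0, (∀ j ∈ s, U j j = 0) ∧ (∀ j k, U j k = U k j) ∧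
      ∀ j ∈ s, ∑ k ∈ s, U j k = p j := by
  obtain ⟨a, hdisj, hunion⟩ := exists_pairwiseDisjoint_Ico_biUnion_eq_Ico s p
  set I : ι → Set ℝ := fun k => Set.Ico (a k) (a k + p k)
  set h : ℝ := (∑ k ∈ s, (p k : ℝ)) / 2 with hh
  have hunion' : ⋃ k ∈ s, I k = Set.Ico 0 (2 * h) := by
    rw [hunion, hh, mul_div_cancel₀ _ two_ne_zero]
  have hle : ∀ j ∈ s, (p j : ℝ) ≤ h := fun j hj => by
    have htwice : p j + p j ≤ ∑ k ∈ s, p k := add_sum_erase s p hj ▸ add_le_add le_rfl (hp j hj)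
    have htwice' : (p j : ℝ) + p j ≤ ∑ k ∈ s, (p k : ℝ) := by exact_mod_cast htwice
    rw [hh]; linarith
  have hrow : ∀ j ∈ s, ∑ k ∈ s, antipodalOverlap I h j k = ENNReal.ofReal (p j) := fun j hj => by
    rw [sum_antipodalOverlap hdisj (fun k _ => measurableSet_Ico) hunion' hj, Real.volume_Ico,
      add_sub_cancel_left]
  refine ⟨fun j k => (antipodalOverlap I h j k).toNNReal, fun j hj => ?_, fun j k => ?_,
    fun j hj => ?_⟩
  all_goals dsimp only
  · rw [antipodalOverlap_self_eq_zero (I := I) (j := j) rfl (hle j hj), ENNReal.toNNReal_zero]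
  · rw [antipodalOverlap_comm]
  · rw [← ENNReal.toNNReal_sum (ENNReal.sum_ne_top.1 (hrow j hj ▸ ENNReal.ofReal_ne_top)),
      hrow j hj, ENNReal.ofReal_coe_nnreal, ENNReal.toNNReal_coe]

theorem balancing_on_complement_general {n : ℕ} (p : Fin n → NNReal)
    (i : Fin n)
    (h : ∀ j, j ≠ i → p j ≤ ∑ k ∈ (Finset.univ.erase i).erase j, p k) :
    ∃ U : {j : Fin n // j ≠ i} → {j : Fin n // j ≠ i} → NNReal,
      (∀ j, U j j = 0) ∧ (∀ j k, U j k = U k j) ∧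
      (∀ j, ∑ k, U j k = p j.val) := by
  have hmem : ∀ j : Fin n, j ∈ Finset.univ.erase i ↔ j ≠ i := by simp
  obtain ⟨U, hdiag, hsymm, hrow⟩ := (Finset.univ.erase i).exists_symm_rowSum_eq_of_le_sum_erase p
    fun j hj => h j ((hmem j).1 hj)
  refine ⟨fun j k => U j k, fun j => hdiag j ((hmem j).2 j.2), fun j k => hsymm j k, fun j => ?_⟩
  rw [← Finset.sum_subtype _ hmem (U j)]
  exact hrow j ((hmem j).2 j.2)

theorem balancing_on_complement {n : ℕ} (hn : 3 ≤ n) (p : Fin n → NNReal)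
    (i : Fin n)
    (h : ∀ j, j ≠ i → p j ≤ ∑ k ∈ (Finset.univ.erase i).erase j, p k) :
    ∃ U : {j : Fin n // j ≠ i} → {j : Fin n // j ≠ i} → NNReal,
      (∀ j, U j j = 0) ∧ (∀ j k, U j k = U k j) ∧
      (∀ j, ∑ k, U j k = p j.val) :=
  balancing_on_complement_general p i h
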